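/- arXiv:2408.16441 — 6 statements merged into one kernel-verified Lean document; each statement's English description precedes it below -/
import Mathlib

section
/- Let K be a non-archimedean local field and V a finite-dimensional K-vector space with a norm ‖·‖ admitting an orthogonal basis {v_1,…,v_n}. If v′ = ∑_{i=1}^n a_i v_i with a_1 ≠ 0 and ‖v′‖ = |a_1|·‖v_1‖, then {v′, v_2, …, v_n} is again an orthogonal basis for ‖·‖. -/
/-- A (non-archimedean) norm on a vector space `V` over a normed field `K`:
a function `f : V → ℝ≥0` with `f v = 0` iff `v = 0`, `f (a • v) = |a| * f v`,
and the ultrametric inequality `f (v + w) ≤ max (f v) (f w)`. -/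
structure IsVecNorm (K : Type*) [NormedField K] (V : Type*) [AddCommGroup V] [Module K V]
    (f : V → ℝ) : Prop where
  nonneg : ∀ v, 0 ≤ f v
  eq_zero_iff : ∀ v, f v = 0 ↔ v = 0
  smul_eq : ∀ (a : K) (v : V), f (a • v) = ‖a‖ * f v
  add_le_max : ∀ v w, f (v + w) ≤ max (f v) (f w)

/-- A family `v : Fin n → V` is an orthogonal basis for the norm `f` if it is a basis of `V`
and `f (∑ i, a i • v i) = max_i ‖a i‖ * f (v i)` for all scalars `a`. -/
def IsOrthogonalBasis (K : Type*) [NormedField K] {V : Type*} [AddCommGroup V] [Module K V]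
    {n : ℕ} (f : V → ℝ) (v : Fin n → V) : Prop :=
  LinearIndependent K v ∧ Submodule.span K (Set.range v) = ⊤ ∧
    ∀ a : Fin n → K, f (∑ i, a i • v i) = ⨆ i, ‖a i‖ * f (v i)

/-- Let `K` be a non-archimedean local field and `V` a finite-dimensional
`K`-vector space with a norm `f` admitting an orthogonal basis `v₀, …, vₙ`.
If `v′ = ∑ i, a i • v i` with `a 0 ≠ 0` and `f v′ = ‖a 0‖ * f (v 0)`, then
`v′, v₁, …, vₙ` is again an orthogonal basis for `f`. -/
theorem isOrthogonalBasis_update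
    (K : Type*) [NontriviallyNormedField K] [IsUltrametricDist K] [LocallyCompactSpace K]
    (V : Type*) [AddCommGroup V] [Module K V] [FiniteDimensional K V]
    (f : V → ℝ) (hf : IsVecNorm K V f)
    {n : ℕ} (v : Fin (n + 1) → V) (hv : IsOrthogonalBasis K f v)
    (a : Fin (n + 1) → K) (ha : a 0 ≠ 0)
    (v' : V) (hv' : v' = ∑ i, a i • v i)
    (hnorm : f v' = ‖a 0‖ * f (v 0)) :
    IsOrthogonalBasis K f (Function.update v 0 v') := by
  obtain ⟨hli, hspan, hnormv⟩ := hv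
  set w := Function.update v 0 v' with hw
  have hw0 : w 0 = v' := Function.update_self 0 v' v
  have hws : ∀ i : Fin n, w i.succ = v i.succ :=
    fun i => Function.update_of_ne (Fin.succ_ne_zero i) v' v
  have hfv : ∀ i, 0 < f (v i) := by
    intro i
    rcases lt_or_eq_of_le (hf.nonneg (v i)) with h | h
    · exact h
    · exact absurd ((hf.eq_zero_iff (v i)).mp h.symm) (hli.ne_zero i)
  have ha0 : (0:ℝ) < ‖a 0‖ := norm_pos_iff.mpr ha
  have hfw : ∀ i, 0 < f (w i) := by
    intro i
    rcases Fin.eq_zero_or_eq_succ i with rfl | ⟨j, rfl⟩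
    · rw [hw0, hnorm]; exact mul_pos ha0 (hfv 0)
    · rw [hws j]; exact hfv j.succ
  have hbound : ∀ i, ‖a i‖ * f (v i) ≤ ‖a 0‖ * f (v 0) := by
    intro i
    rw [← hnorm, hv', hnormv a]
    exact le_ciSup (f := fun i => ‖a i‖ * f (v i)) (Set.Finite.bddAbove (Set.finite_range _)) i
  -- key norm formula
  have key : ∀ b : Fin (n+1) → K, f (∑ i, b i • w i) = ⨆ i, ‖b i‖ * f (w i) := by
    intro b
    set c : Fin (n+1) → K := fun i => if i = 0 then b 0 * a 0 else b i + b 0 * a i with hc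
    have hc0 : c 0 = b 0 * a 0 := if_pos rfl
    have hcs : ∀ i : Fin n, c i.succ = b i.succ + b 0 * a i.succ :=
      fun i => if_neg (Fin.succ_ne_zero i)
    have hsum : ∑ i, b i • w i = ∑ i, c i • v i := by
      rw [Fin.sum_univ_succ, Fin.sum_univ_succ, hw0, hv', hc0, Fin.sum_univ_succ, smul_add,
        Finset.smul_sum]
      simp only [hws, hcs, smul_smul, add_smul, Finset.sum_add_distrib]
      abel
    rw [hsum, hnormv c]
    have hbdd1 : BddAbove (Set.range fun i => ‖b i‖ * f (w i)) :=
      Set.Finite.bddAbove (Set.finite_range _)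
    have hbdd2 : BddAbove (Set.range fun i => ‖c i‖ * f (v i)) :=
      Set.Finite.bddAbove (Set.finite_range _)
    apply le_antisymm
    · apply ciSup_le
      intro i
      rcases Fin.eq_zero_or_eq_succ i with rfl | ⟨j, rfl⟩
      · have : ‖c 0‖ * f (v 0) = ‖b 0‖ * f (w 0) := by
          rw [hw0, hnorm, hc0, norm_mul]; ring
        rw [this]
        exact le_ciSup hbdd1 0
      · have h1 : ‖c j.succ‖ ≤ max ‖b j.succ‖ (‖b 0‖ * ‖a j.succ‖) := by
          rw [hcs, ← norm_mul]
          exact IsUltrametricDist.norm_add_le_max _ _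
        calc ‖c j.succ‖ * f (v j.succ)
            ≤ max ‖b j.succ‖ (‖b 0‖ * ‖a j.succ‖) * f (v j.succ) :=
              mul_le_mul_of_nonneg_right h1 (hf.nonneg _)
          _ = max (‖b j.succ‖ * f (v j.succ)) (‖b 0‖ * (‖a j.succ‖ * f (v j.succ))) := by
              rw [max_mul_of_nonneg _ _ (hf.nonneg _)]; ring_nf
          _ ≤ max (‖b j.succ‖ * f (w j.succ)) (‖b 0‖ * f (w 0)) := by
              apply max_le_max
              · rw [hws]
              · rw [hw0, hnorm]
                exact mul_le_mul_of_nonneg_left (hbound j.succ) (norm_nonneg _)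
          _ ≤ ⨆ i, ‖b i‖ * f (w i) := by
              apply max_le
              · exact le_ciSup hbdd1 j.succ
              · exact le_ciSup hbdd1 0
    · apply ciSup_le
      intro i
      rcases Fin.eq_zero_or_eq_succ i with rfl | ⟨j, rfl⟩
      · have : ‖b 0‖ * f (w 0) = ‖c 0‖ * f (v 0) := by
          rw [hw0, hnorm, hc0, norm_mul]; ring
        rw [this]
        exact le_ciSup hbdd2 0
      · have h1 : ‖b j.succ‖ ≤ max ‖c j.succ‖ (‖b 0‖ * ‖a j.succ‖) := by
          have : b j.succ = c j.succ + (-(b 0 * a j.succ)) := by rw [hcs]; ring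
          rw [this, ← norm_mul]
          calc ‖c j.succ + -(b 0 * a j.succ)‖
              ≤ max ‖c j.succ‖ ‖-(b 0 * a j.succ)‖ := IsUltrametricDist.norm_add_le_max _ _
            _ = max ‖c j.succ‖ ‖b 0 * a j.succ‖ := by rw [norm_neg]
        calc ‖b j.succ‖ * f (w j.succ)
            ≤ max ‖c j.succ‖ (‖b 0‖ * ‖a j.succ‖) * f (v j.succ) := by
              rw [hws]
              exact mul_le_mul_of_nonneg_right h1 (hf.nonneg _)
          _ = max (‖c j.succ‖ * f (v j.succ)) (‖b 0‖ * (‖a j.succ‖ * f (v j.succ))) := by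
              rw [max_mul_of_nonneg _ _ (hf.nonneg _)]; ring_nf
          _ ≤ max (‖c j.succ‖ * f (v j.succ)) (‖c 0‖ * f (v 0)) := by
              apply max_le_max le_rfl
              rw [hc0, norm_mul, mul_assoc]
              exact mul_le_mul_of_nonneg_left (hbound j.succ) (norm_nonneg _)
          _ ≤ ⨆ i, ‖c i‖ * f (v i) := by
              apply max_le
              · exact le_ciSup hbdd2 j.succ
              · exact le_ciSup hbdd2 0
  refine ⟨?_, ?_, key⟩
  · rw [Fintype.linearIndependent_iff]
    intro g hg i
    have h0 : f (∑ i, g i • w i) = 0 := by rw [hg]; exact (hf.eq_zero_iff 0).mpr rfl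
    rw [key g] at h0
    have h1 : ‖g i‖ * f (w i) ≤ 0 := by
      rw [← h0]
      exact le_ciSup (f := fun i => ‖g i‖ * f (w i)) (Set.Finite.bddAbove (Set.finite_range _)) i
    have h2 : ‖g i‖ ≤ 0 := by
      by_contra h
      push_neg at h
      exact absurd h1 (not_le.mpr (mul_pos h (hfw i)))
    exact norm_le_zero_iff.mp h2
  · rw [eq_top_iff, ← hspan, Submodule.span_le]
    rintro x ⟨i, rfl⟩
    rcases Fin.eq_zero_or_eq_succ i with rfl | ⟨j, rfl⟩
    · have hv0 : v 0 = (a 0)⁻¹ • (w 0 - ∑ j : Fin n, a j.succ • w j.succ) := by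
        rw [hw0, hv', Fin.sum_univ_succ]
        simp only [hws]
        rw [add_sub_cancel_right, smul_smul, inv_mul_cancel₀ ha, one_smul]
      rw [hv0]
      exact Submodule.smul_mem _ _ (Submodule.sub_mem _
        (Submodule.subset_span ⟨0, rfl⟩)
        (Submodule.sum_mem _ fun j _ =>
          Submodule.smul_mem _ _ (Submodule.subset_span ⟨j.succ, rfl⟩)))
    · rw [← hws j]
      exact Submodule.subset_span ⟨j.succ, rfl⟩
end

section
/- Let K be a non-archimedean local field, V a finite-dimensional K-vector space equipped with two norms ‖·‖ and ‖·‖′, and let v ∈ V∖{0} realize the supremum sup_{u ∈ V∖{0}} ‖u‖′/‖u‖ (i.e. ‖v‖′/‖v‖ ≥ ‖u‖′/‖u‖ for all u ≠ 0). Then for every λ ∈ V^∨∖{0}, if the decomposition V = Kv ⊕ ker(λ) is orthogonal for ‖·‖′, then it is also orthogonal for ‖·‖. -/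
/-- A direct-sum decomposition `V = W₁ ⊕ W₂` is orthogonal for the norm `f` if it is a
decomposition (`W₁` and `W₂` are complementary submodules) and
`f (x + y) = max (f x) (f y)` for all `x ∈ W₁`, `y ∈ W₂`. -/
def IsOrthogonalDecomp (K : Type*) [NormedField K] {V : Type*} [AddCommGroup V] [Module K V]
    (f : V → ℝ) (W₁ W₂ : Submodule K V) : Prop :=
  IsCompl W₁ W₂ ∧ ∀ x ∈ W₁, ∀ y ∈ W₂, f (x + y) = max (f x) (f y)


lemma IsVecNorm.neg_eq {K : Type*} [NormedField K] {V : Type*} [AddCommGroup V] [Module K V]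
    {f : V → ℝ} (hf : IsVecNorm K V f) (x : V) : f (-x) = f x := by
  have := hf.smul_eq (-1 : K) x
  simpa using this

lemma IsVecNorm.add_eq_max_of_ne {K : Type*} [NormedField K] {V : Type*} [AddCommGroup V]
    [Module K V] {f : V → ℝ} (hf : IsVecNorm K V f) {x y : V} (h : f x ≠ f y) :
    f (x + y) = max (f x) (f y) := by
  wlog hlt : f y < f x generalizing x y
  · rw [add_comm, max_comm]
    exact this h.symm (lt_of_le_of_ne (not_lt.mp hlt) h)
  refine le_antisymm (hf.add_le_max x y) ?_
  rw [max_eq_left hlt.le]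
  by_contra hc
  push_neg at hc
  have h2 : f x ≤ max (f (x + y)) (f y) := by
    have := hf.add_le_max (x + y) (-y)
    simpa [hf.neg_eq] using this
  exact absurd h2 (not_le.mpr (max_lt hc hlt))

/-- Let `K` be a non-archimedean local field, `V` a finite-dimensional
`K`-vector space with two norms `f` and `f'`, and let `v ≠ 0` realize the supremum
`sup_{u ≠ 0} f' u / f u`. Then for every nonzero linear functional `λ`, if the
decomposition `V = Kv ⊕ ker λ` is orthogonal for `f'`, then it is also orthogonal
for `f`. -/
theorem isOrthogonalDecomp_of_isOrthogonalDecomp_of_realizes_sup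
    (K : Type*) [NontriviallyNormedField K] [IsUltrametricDist K] [LocallyCompactSpace K]
    (V : Type*) [AddCommGroup V] [Module K V] [FiniteDimensional K V]
    (f f' : V → ℝ) (hf : IsVecNorm K V f) (hf' : IsVecNorm K V f')
    (v : V) (hv : v ≠ 0)
    (hsup : ∀ u : V, u ≠ 0 → f' u / f u ≤ f' v / f v)
    (l : V →ₗ[K] K) (hl : l ≠ 0)
    (horth : IsOrthogonalDecomp K f' (Submodule.span K {v}) (LinearMap.ker l)) :
    IsOrthogonalDecomp K f (Submodule.span K {v}) (LinearMap.ker l) := by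
  obtain ⟨hc, ho⟩ := horth
  refine ⟨hc, fun x hx y hy => ?_⟩
  obtain ⟨a, rfl⟩ := Submodule.mem_span_singleton.mp hx
  have hfv : 0 < f v :=
    lt_of_le_of_ne (hf.nonneg v) (fun h => hv ((hf.eq_zero_iff v).mp h.symm))
  have hf'v : 0 < f' v :=
    lt_of_le_of_ne (hf'.nonneg v) (fun h => hv ((hf'.eq_zero_iff v).mp h.symm))
  by_contra hne
  have hlt : f (a • v + y) < max (f (a • v)) (f y) :=
    lt_of_le_of_ne (hf.add_le_max _ _) hne
  have heq : f (a • v) = f y := by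
    by_contra hne2
    exact hne (hf.add_eq_max_of_ne hne2)
  have hmax : max (f (a • v)) (f y) = f (a • v) := by rw [heq, max_self]
  have hxpos : 0 < f (a • v) := by
    rcases lt_or_eq_of_le (hf.nonneg (a • v)) with h | h
    · exact h
    · exfalso
      have hx0 : a • v = 0 := (hf.eq_zero_iff _).mp h.symm
      have hy0 : y = 0 := (hf.eq_zero_iff _).mp (by rw [heq] at h; exact h.symm)
      rw [hx0, hy0] at hlt
      simp at hlt
  have ha : a ≠ 0 := by
    rintro rfl
    rw [hf.smul_eq] at hxpos
    simp at hxpos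
  have hu : a • v + y ≠ 0 := by
    intro h0
    have : a • v ∈ Submodule.span K {v} ⊓ LinearMap.ker l := by
      refine ⟨hx, ?_⟩
      have : a • v = -y := by linear_combination (norm := module) h0
      rw [this]
      exact neg_mem hy
    rw [hc.inf_eq_bot, Submodule.mem_bot] at this
    exact absurd ((hf.eq_zero_iff _).mpr this) (ne_of_gt hxpos)
  have hfu : 0 < f (a • v + y) :=
    lt_of_le_of_ne (hf.nonneg _) (fun h => hu ((hf.eq_zero_iff _).mp h.symm))
  have h1 : f' (a • v + y) ≤ f' v / f v * f (a • v + y) := by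
    have := hsup _ hu
    rw [div_le_div_iff₀ hfu hfv] at this
    rw [div_mul_eq_mul_div, le_div_iff₀ hfv]
    linarith
  have h2 : f (a • v + y) < ‖a‖ * f v := by
    rw [← hf.smul_eq]; rw [hmax] at hlt; exact hlt
  have h3 : f' (a • v + y) < ‖a‖ * f' v := by
    calc f' (a • v + y) ≤ f' v / f v * f (a • v + y) := h1
    _ < f' v / f v * (‖a‖ * f v) := by
        apply mul_lt_mul_of_pos_left h2 (div_pos hf'v hfv)
    _ = ‖a‖ * f' v := by field_simp
  have h4 : ‖a‖ * f' v ≤ f' (a • v + y) := by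
    rw [ho (a • v) hx y hy, ← hf'.smul_eq]
    exact le_max_left _ _
  linarith
end

section
/- Let K be a non-archimedean local field and V a K-vector space of finite dimension N ≥ 1 equipped with two norms ‖·‖ and ‖·‖′. Suppose V = Kv ⊕ W is a direct-sum decomposition which is orthogonal for both norms, and suppose λ_1(‖·‖, ‖·‖′) = log(‖v‖′/‖v‖). Then for every integer i with 1 ≤ i ≤ N − 1, one has λ_i(‖·‖|_W, ‖·‖′|_W) = λ_{i+1}(‖·‖, ‖·‖′), where ‖·‖|_W and ‖·‖′|_W denote the restricted norms on W. -/
/-- The `i`-th term `λ_i(f, f')` of the relative spectrum of the norm `f'` with respect to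
the norm `f`: the sup over subspaces `W ⊆ V` with `dim W ≥ i` of
`inf_{w ∈ W∖{0}} log (f' w / f w)`. -/
noncomputable def relativeSpectrum (K : Type*) [NormedField K] (V : Type*) [AddCommGroup V]
    [Module K V] (f f' : V → ℝ) (i : ℕ) : ℝ :=
  ⨆ W : {W : Submodule K V // i ≤ Module.finrank K W},
    ⨅ w : {w : V // w ∈ W.1 ∧ w ≠ 0}, Real.log (f' w.1 / f w.1)

/-!
Write `ρ x = log (f' x / f x)`; by hypothesis `v` maximises `ρ`. If `U ⊆ W` has dimension `i`,
then `U ⊕ Kv` has dimension `i + 1`, and orthogonality for both norms gives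
`ρ (u + a v) ≥ min (ρ u) (ρ v) ≥ inf_U ρ`, so the infimum over `U ⊕ Kv` is at least that
over `U`.
Conversely a subspace of dimension `i + 1` meets `W` in dimension at least `i`, and the infimum
over the intersection is no smaller. Completeness of `K` makes the two norms equivalent, so every
infimum and supremum involved is of a bounded set and none takes Lean's junk value.
-/

open Module Submodule

section

variable {α : Type*} [ConditionallyCompleteLinearOrder α] {ι ι' : Sort*}
  {g : ι → α} {g' : ι' → α}

lemma ciSup_eq_ciSup_of_forall_exists_le (h : ∀ i, ∃ j, g i ≤ g' j)
    (h' : ∀ j, ∃ i, g' j ≤ g i) : ⨆ i, g i = ⨆ j, g' j :=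
  csSup_eq_csSup_of_forall_exists_le
    (by rintro _ ⟨i, rfl⟩; obtain ⟨j, hj⟩ := h i; exact ⟨_, ⟨j, rfl⟩, hj⟩)
    (by rintro _ ⟨j, rfl⟩; obtain ⟨i, hi⟩ := h' j; exact ⟨_, ⟨i, rfl⟩, hi⟩)

end

lemma Submodule.finrank_le_finrank_inf_add_of_isCompl {K V : Type*} [DivisionRing K]
    [AddCommGroup V] [Module K V] [FiniteDimensional K V] {L W : Submodule K V} (h : IsCompl L W)
    (U : Submodule K V) : finrank K U ≤ finrank K ↥(W ⊓ U) + finrank K L := by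
  have hsup := finrank_sup_add_finrank_inf_eq W U
  have hle := (W ⊔ U).finrank_le
  have hV := finrank_add_eq_of_isCompl h
  omega

namespace IsVecNorm

variable {K : Type*} [NormedField K] {V : Type*} [AddCommGroup V] [Module K V]
  {f f' : V → ℝ}

lemma pos (hf : IsVecNorm K V f) {x : V} (hx : x ≠ 0) : 0 < f x :=
  (hf.nonneg x).lt_of_ne' fun h => hx ((hf.eq_zero_iff x).1 h)

lemma map_neg (hf : IsVecNorm K V f) (x : V) : f (-x) = f x := by
  rw [← neg_one_smul K x, hf.smul_eq, norm_neg, norm_one, one_mul]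

lemma add_le (hf : IsVecNorm K V f) (x y : V) : f (x + y) ≤ f x + f y :=
  (hf.add_le_max x y).trans (max_le_add_of_nonneg (hf.nonneg x) (hf.nonneg y))

lemma div_smul_eq_div (hf : IsVecNorm K V f) (hf' : IsVecNorm K V f') {a : K} (ha : a ≠ 0)
    (x : V) : f' (a • x) / f (a • x) = f' x / f x := by
  rw [hf.smul_eq, hf'.smul_eq, mul_div_mul_left _ _ (norm_ne_zero_iff.2 ha)]

def toAddGroupNorm (hf : IsVecNorm K V f) : AddGroupNorm V where
  toFun := f
  map_zero' := (hf.eq_zero_iff 0).2 rfl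
  add_le' := hf.add_le
  neg' := hf.map_neg
  eq_zero_of_map_eq_zero' x := (hf.eq_zero_iff x).1

-- Normed by `f`, `V` falls under Mathlib's equivalence of norms in finite dimension.
abbrev toNormedSpace (hf : IsVecNorm K V f) :
    @NormedSpace K V _ hf.toAddGroupNorm.toNormedAddCommGroup.toSeminormedAddCommGroup :=
  letI := hf.toAddGroupNorm.toNormedAddCommGroup
  { norm_smul_le a x := (hf.smul_eq a x).le }

lemma le_log_div_add (hf : IsVecNorm K V f) (hf' : IsVecNorm K V f') {x y : V} {c : ℝ}
    (hx : x ≠ 0) (hy : y ≠ 0) (hxy : f (x + y) = max (f x) (f y))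
    (hxy' : f' (x + y) = max (f' x) (f' y))
    (hcx : c ≤ Real.log (f' x / f x)) (hcy : c ≤ Real.log (f' y / f y)) :
    c ≤ Real.log (f' (x + y) / f (x + y)) := by
  have hpos : ∀ {z}, z ≠ 0 → 0 < f' z / f z := fun hz => div_pos (hf'.pos hz) (hf.pos hz)
  have hfxy : 0 < f (x + y) := hxy ▸ lt_max_of_lt_left (hf.pos hx)
  rw [Real.le_log_iff_exp_le (hpos hx), le_div_iff₀ (hf.pos hx)] at hcx
  rw [Real.le_log_iff_exp_le (hpos hy), le_div_iff₀ (hf.pos hy)] at hcy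
  rw [Real.le_log_iff_exp_le (div_pos (hxy' ▸ lt_max_of_lt_left (hf'.pos hx)) hfxy),
    le_div_iff₀ hfxy, hxy, hxy', mul_max_of_nonneg _ _ (Real.exp_pos c).le]
  exact max_le_max hcx hcy

end IsVecNorm

noncomputable def minLogRatio (K : Type*) [NormedField K] {V : Type*} [AddCommGroup V]
    [Module K V] (f f' : V → ℝ) (U : Submodule K V) : ℝ :=
  ⨅ w : {w : V // w ∈ U ∧ w ≠ 0}, Real.log (f' w.1 / f w.1)

section minLogRatio

variable {K : Type*} [NormedField K] {V : Type*} [AddCommGroup V] [Module K V]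
  {f f' : V → ℝ} {U U₁ U₂ : Submodule K V} {x : V}

lemma relativeSpectrum_eq_iSup (i : ℕ) : relativeSpectrum K V f f' i =
    ⨆ U : {U : Submodule K V // i ≤ finrank K U}, minLogRatio K f f' U :=
  rfl

lemma minLogRatio_map_subtype (W : Submodule K V) (U : Submodule K W) :
    minLogRatio K (fun w : W => f w) (fun w => f' w) U = minLogRatio K f f' (U.map W.subtype) := by
  unfold minLogRatio
  refine Function.Surjective.iInf_comp (g := fun w : {x : V // x ∈ U.map W.subtype ∧ x ≠ 0} =>
    Real.log (f' w.1 / f w.1)) (f := fun w : {w : W // w ∈ U ∧ w ≠ 0} =>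
      ⟨w.1, mem_map_of_mem w.2.1, by simpa using w.2.2⟩) ?_
  rintro ⟨x, hxU, hx0⟩
  obtain ⟨w, hw, rfl⟩ := mem_map.1 hxU
  exact ⟨⟨w, hw, by simpa using hx0⟩, rfl⟩

lemma le_minLogRatio {c : ℝ} (hU : U ≠ ⊥)
    (h : ∀ x ∈ U, x ≠ 0 → c ≤ Real.log (f' x / f x)) : c ≤ minLogRatio K f f' U := by
  obtain ⟨x, hxU, hx0⟩ := exists_mem_ne_zero_of_ne_bot hU
  have : Nonempty {w : V // w ∈ U ∧ w ≠ 0} := ⟨⟨x, hxU, hx0⟩⟩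
  exact le_ciInf fun w => h w.1 w.2.1 w.2.2

end minLogRatio

namespace IsVecNorm

variable {K : Type*} [NontriviallyNormedField K] [CompleteSpace K] {V : Type*} [AddCommGroup V]
  [Module K V] {f f' : V → ℝ} {E : Type*} [NormedAddCommGroup E] [NormedSpace K E]

lemma exists_norm_map_le [FiniteDimensional K V] (hf : IsVecNorm K V f) (g : V →ₗ[K] E) :
    ∃ C, ∀ x, ‖g x‖ ≤ C * f x := by
  let := hf.toAddGroupNorm.toNormedAddCommGroup
  let := hf.toNormedSpace
  exact ⟨_, (LinearMap.toContinuousLinearMap g).le_opNorm⟩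

lemma exists_map_le_mul_norm [FiniteDimensional K E] (hf : IsVecNorm K V f) (g : E →ₗ[K] V) :
    ∃ C, 0 ≤ C ∧ ∀ y, f (g y) ≤ C * ‖y‖ := by
  let := hf.toAddGroupNorm.toNormedAddCommGroup
  let := hf.toNormedSpace
  exact ⟨_, norm_nonneg _, (LinearMap.toContinuousLinearMap g).le_opNorm⟩

lemma exists_le_mul [FiniteDimensional K V] (hf : IsVecNorm K V f) (hf' : IsVecNorm K V f') :
    ∃ C, ∀ x, f' x ≤ C * f x := by
  let e := (Module.finBasis K V).equivFun
  obtain ⟨c, hc⟩ := hf.exists_norm_map_le e.toLinearMap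
  obtain ⟨c', hc'0, hc'⟩ := hf'.exists_map_le_mul_norm e.symm.toLinearMap
  refine ⟨c' * c, fun x => ?_⟩
  calc f' x = f' (e.symm (e x)) := by rw [e.symm_apply_apply]
    _ ≤ c' * ‖e x‖ := hc' _
    _ ≤ c' * (c * f x) := mul_le_mul_of_nonneg_left (hc x) hc'0
    _ = c' * c * f x := (mul_assoc _ _ _).symm

lemma exists_log_div_le [FiniteDimensional K V] (hf : IsVecNorm K V f) (hf' : IsVecNorm K V f') :
    ∃ C, ∀ x, x ≠ 0 → Real.log (f' x / f x) ≤ C := by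
  obtain ⟨C, hC⟩ := hf.exists_le_mul hf'
  exact ⟨Real.log C, fun x hx => Real.log_le_log (div_pos (hf'.pos hx) (hf.pos hx))
    ((div_le_iff₀ (hf.pos hx)).2 (hC x))⟩

lemma exists_le_log_div [FiniteDimensional K V] (hf : IsVecNorm K V f) (hf' : IsVecNorm K V f') :
    ∃ C, ∀ x, x ≠ 0 → C ≤ Real.log (f' x / f x) := by
  obtain ⟨C, hC⟩ := hf'.exists_log_div_le hf
  refine ⟨-C, fun x hx => ?_⟩
  rw [← inv_div, Real.log_inv]
  exact neg_le_neg (hC x hx)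

end IsVecNorm

section minLogRatio

variable {K : Type*} [NontriviallyNormedField K] [CompleteSpace K] {V : Type*} [AddCommGroup V]
  [Module K V] [FiniteDimensional K V] {f f' : V → ℝ} {U U₁ U₂ : Submodule K V} {x : V}

lemma minLogRatio_le (hf : IsVecNorm K V f) (hf' : IsVecNorm K V f') (hxU : x ∈ U)
    (hx0 : x ≠ 0) : minLogRatio K f f' U ≤ Real.log (f' x / f x) := by
  obtain ⟨c, hc⟩ := hf.exists_le_log_div hf'
  refine ciInf_le ⟨c, ?_⟩ (⟨x, hxU, hx0⟩ : {w : V // w ∈ U ∧ w ≠ 0})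
  exact Set.forall_mem_range.2 fun w => hc w.1 w.2.2

lemma minLogRatio_anti (hf : IsVecNorm K V f) (hf' : IsVecNorm K V f') (hU₁ : U₁ ≠ ⊥)
    (h : U₁ ≤ U₂) : minLogRatio K f f' U₂ ≤ minLogRatio K f f' U₁ :=
  le_minLogRatio hU₁ fun _ hx hx0 => minLogRatio_le hf hf' (h hx) hx0

lemma minLogRatio_span_singleton (hf : IsVecNorm K V f) (hf' : IsVecNorm K V f') (hx : x ≠ 0) :
    minLogRatio K f f' (span K {x}) = Real.log (f' x / f x) := by
  refine le_antisymm (minLogRatio_le hf hf' (mem_span_singleton_self x) hx)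
    (le_minLogRatio ((span_singleton_eq_bot).not.2 hx) fun y hy hy0 => ?_)
  obtain ⟨a, rfl⟩ := mem_span_singleton.1 hy
  rw [hf.div_smul_eq_div hf' (left_ne_zero_of_smul hy0)]

lemma log_div_le_relativeSpectrum_one (hf : IsVecNorm K V f) (hf' : IsVecNorm K V f')
    (hx : x ≠ 0) : Real.log (f' x / f x) ≤ relativeSpectrum K V f f' 1 := by
  obtain ⟨C, hC⟩ := hf.exists_log_div_le hf'
  have hbdd : BddAbove (Set.range fun U : {U : Submodule K V // 1 ≤ finrank K U} =>
      minLogRatio K f f' U) := by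
    refine ⟨C, ?_⟩
    rintro _ ⟨⟨U, hU⟩, rfl⟩
    obtain ⟨y, hyU, hy0⟩ := exists_mem_ne_zero_of_ne_bot (one_le_finrank_iff.1 hU)
    exact (minLogRatio_le hf hf' hyU hy0).trans (hC y hy0)
  exact le_ciSup_of_le hbdd ⟨span K {x}, (finrank_span_singleton hx).ge⟩
    (minLogRatio_span_singleton hf hf' hx).ge

-- By orthogonality the ratio at `x + a • v` is at least the smaller of the ratios of its parts,
-- and the ratio at `a • v` beats every vector of `U` because `v` maximises it.
lemma minLogRatio_le_minLogRatio_sup_span (hf : IsVecNorm K V f) (hf' : IsVecNorm K V f')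
    {v : V} {W : Submodule K V} (horth : IsOrthogonalDecomp K f (span K {v}) W)
    (horth' : IsOrthogonalDecomp K f' (span K {v}) W)
    (hvmax : ∀ x, x ≠ 0 → Real.log (f' x / f x) ≤ Real.log (f' v / f v))
    (hUW : U ≤ W) (hU : U ≠ ⊥) :
    minLogRatio K f f' U ≤ minLogRatio K f f' (U ⊔ span K {v}) := by
  obtain ⟨x₀, hx₀U, hx₀⟩ := exists_mem_ne_zero_of_ne_bot hU
  have hline : ∀ a : K, a • v ≠ 0 →
      minLogRatio K f f' U ≤ Real.log (f' (a • v) / f (a • v)) :=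
    fun a hav => by
      rw [hf.div_smul_eq_div hf' (left_ne_zero_of_smul hav)]
      exact (minLogRatio_le hf hf' hx₀U hx₀).trans (hvmax x₀ hx₀)
  refine le_minLogRatio (ne_bot_of_le_ne_bot hU le_sup_left) fun z hz hz0 => ?_
  obtain ⟨x, hx, y, hy, rfl⟩ := mem_sup.1 hz
  obtain ⟨a, rfl⟩ := mem_span_singleton.1 hy
  rcases eq_or_ne x 0 with rfl | hx0
  · rw [zero_add] at hz0 ⊢
    exact hline a hz0
  rcases eq_or_ne (a • v) 0 with hav | hav
  · rw [hav, add_zero] at hz0 ⊢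
    exact minLogRatio_le hf hf' hx hx0
  have hav_mem : a • v ∈ span K {v} := smul_mem _ a (mem_span_singleton_self v)
  rw [add_comm]
  exact hf.le_log_div_add hf' hav hx0 (horth.2 _ hav_mem x (hUW hx))
    (horth'.2 _ hav_mem x (hUW hx)) (hline a hav) (minLogRatio_le hf hf' hx hx0)

end minLogRatio

theorem relativeSpectrum_restrict_of_orthogonal_decomp_general
    (K : Type*) [NontriviallyNormedField K] [LocallyCompactSpace K]
    (V : Type*) [AddCommGroup V] [Module K V] [FiniteDimensional K V]
    (N : ℕ)
    (f f' : V → ℝ) (hf : IsVecNorm K V f) (hf' : IsVecNorm K V f')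
    (v : V) (hv : v ≠ 0) (W : Submodule K V)
    (horth : IsOrthogonalDecomp K f (Submodule.span K {v}) W)
    (horth' : IsOrthogonalDecomp K f' (Submodule.span K {v}) W)
    (hlambda : relativeSpectrum K V f f' 1 = Real.log (f' v / f v)) :
    ∀ i : ℕ, 1 ≤ i → i ≤ N - 1 →
      relativeSpectrum K ↥W (fun w => f (w : V)) (fun w => f' (w : V)) i =
        relativeSpectrum K V f f' (i + 1) := by
  intro i hi _
  have := ProperSpace.of_locallyCompactSpace K (E := K)
  have hvmax : ∀ x, x ≠ 0 → Real.log (f' x / f x) ≤ Real.log (f' v / f v) :=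
    fun x hx => hlambda ▸ log_div_le_relativeSpectrum_one hf hf' hx
  have hvW : v ∉ W := (disjoint_span_singleton' hv).1 horth.1.disjoint.symm
  simp only [relativeSpectrum_eq_iSup, minLogRatio_map_subtype]
  refine ciSup_eq_ciSup_of_forall_exists_le (fun ⟨U, hU⟩ => ?_) (fun ⟨U, hU⟩ => ?_)
  · have hUW : U.map W.subtype ≤ W := map_subtype_le W U
    have hU0 : U.map W.subtype ≠ ⊥ := by
      rw [← one_le_finrank_iff, finrank_map_subtype_eq]; exact hi.trans hU
    refine ⟨⟨U.map W.subtype ⊔ span K {v}, ?_⟩,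
      minLogRatio_le_minLogRatio_sup_span hf hf' horth horth' hvmax hUW hU0⟩
    rw [finrank_sup_span_singleton fun h => hvW (hUW h), finrank_map_subtype_eq]
    omega
  · have hrank : i ≤ finrank K ↥(W ⊓ U) := by
      have := finrank_le_finrank_inf_add_of_isCompl horth.1 U
      rw [finrank_span_singleton hv] at this
      omega
    refine ⟨⟨U.comap W.subtype, by rwa [← finrank_map_subtype_eq, map_comap_subtype]⟩, ?_⟩
    rw [map_comap_subtype]
    exact minLogRatio_anti hf hf' (one_le_finrank_iff.1 (hi.trans hrank)) inf_le_right

/-- Let `K` be a non-archimedean local field and `V` a `K`-vector space of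
dimension `N ≥ 1` with two norms `f`, `f'`. If `V = Kv ⊕ W` is a decomposition orthogonal
for both norms and `λ_1(f, f') = log (f' v / f v)`, then for `1 ≤ i ≤ N - 1`:
`λ_i(f|_W, f'|_W) = λ_{i+1}(f, f')`. -/
theorem relativeSpectrum_restrict_of_orthogonal_decomp
    (K : Type*) [NontriviallyNormedField K] [IsUltrametricDist K] [LocallyCompactSpace K]
    (V : Type*) [AddCommGroup V] [Module K V] [FiniteDimensional K V]
    (N : ℕ) (hN : 1 ≤ N) (hdim : Module.finrank K V = N)
    (f f' : V → ℝ) (hf : IsVecNorm K V f) (hf' : IsVecNorm K V f')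
    (v : V) (hv : v ≠ 0) (W : Submodule K V)
    (horth : IsOrthogonalDecomp K f (Submodule.span K {v}) W)
    (horth' : IsOrthogonalDecomp K f' (Submodule.span K {v}) W)
    (hlambda : relativeSpectrum K V f f' 1 = Real.log (f' v / f v)) :
    ∀ i : ℕ, 1 ≤ i → i ≤ N - 1 →
      relativeSpectrum K ↥W (fun w => f (w : V)) (fun w => f' (w : V)) i =
        relativeSpectrum K V f f' (i + 1) :=
  relativeSpectrum_restrict_of_orthogonal_decomp_general K V N f f' hf hf' v hv W horth horth'
    hlambda
end

section
/- Let K be a non-archimedean local field and let U_1,…,U_m ∈ GL_r(K) be pairwise commuting unipotent matrices. Then there exists an O_K-lattice L ⊆ K^r with U_i·L = L for all i = 1,…,m. -/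
/-!
Write `Uᵢ = 1 + Nᵢ` with `Nᵢ` nilpotent; the `Nᵢ` commute pairwise. Starting from the standard
lattice, replace the current lattice `L` by `∑ₖ Nᵢᵏ L` for `i = 1, …, m` in turn. Each step keeps
the lattice finitely generated (only finitely many powers of `Nᵢ` are nonzero), makes it
`Nᵢ`-stable, and preserves stability under the earlier `Nⱼ` since they commute with `Nᵢ`. Finally, on a
lattice `L` stable under `Nᵢ`, `Uᵢ` restricts to `1 + Nᵢ|_L`, which is invertible because `Nᵢ|_L`
is nilpotent; hence `Uᵢ L = L`.
-/

/-- The valuation ring `O_K = {a ∈ K : ‖a‖ ≤ 1}` of a non-archimedean normed field. -/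
def ringOfIntegers (K : Type*) [NormedField K] [IsUltrametricDist K] : Subring K where
  carrier := {a : K | ‖a‖ ≤ 1}
  zero_mem' := by simp
  one_mem' := by simp
  add_mem' := by
    intro a b ha hb
    exact le_trans (IsUltrametricDist.norm_add_le_max a b) (max_le ha hb)
  mul_mem' := by
    intro a b ha hb
    simp only [Set.mem_setOf_eq] at *
    calc ‖a * b‖ = ‖a‖ * ‖b‖ := norm_mul a b
      _ ≤ 1 * 1 := mul_le_mul ha hb (norm_nonneg b) zero_le_one
      _ = 1 := one_mul 1
  neg_mem' := by
    intro a ha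
    simpa using ha

namespace Submodule

section Semiring

variable {R M : Type*} [Semiring R] [AddCommMonoid M] [Module R M]
  {f g : Module.End R M} {L : Submodule R M}

lemma le_iSup_map_pow (f : Module.End R M) (L : Submodule R M) :
    L ≤ ⨆ k : ℕ, L.map (f ^ k) := by
  simpa [Module.End.one_eq_id] using le_iSup (fun k : ℕ => L.map (f ^ k)) 0

lemma fg_iSup_map_pow (hf : IsNilpotent f) (hL : L.FG) : (⨆ k : ℕ, L.map (f ^ k)).FG := by
  obtain ⟨n, hn⟩ := hf
  suffices h : ⨆ k : ℕ, L.map (f ^ k) = ⨆ k : Fin n, L.map (f ^ (k : ℕ)) from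
    h ▸ fg_iSup _ fun _ => hL.map _
  refine le_antisymm (iSup_le fun k => ?_) (iSup_le fun k => le_iSup_of_le (k : ℕ) le_rfl)
  by_cases hk : k < n
  · exact le_iSup_of_le ⟨k, hk⟩ le_rfl
  · simp [pow_eq_zero_of_le (not_lt.1 hk) hn]

lemma iSup_map_pow_mem_invtSubmodule (f : Module.End R M) (L : Submodule R M) :
    ⨆ k : ℕ, L.map (f ^ k) ∈ f.invtSubmodule := by
  rw [Module.End.mem_invtSubmodule_iff_map_le, map_iSup]
  refine iSup_le fun k => le_iSup_of_le (k + 1) ?_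
  rw [← map_comp, ← Module.End.mul_eq_comp, ← pow_succ']

lemma iSup_map_pow_mem_invtSubmodule_of_commute (hfg : Commute f g) (hL : L ∈ g.invtSubmodule) :
    ⨆ k : ℕ, L.map (f ^ k) ∈ g.invtSubmodule := by
  rw [Module.End.mem_invtSubmodule_iff_map_le, map_iSup]
  refine iSup_le fun k => le_iSup_of_le k ?_
  rw [← map_comp, ← Module.End.mul_eq_comp, ((hfg.pow_left k).eq).symm, Module.End.mul_eq_comp,
    map_comp]
  exact map_mono ((Module.End.mem_invtSubmodule_iff_map_le g).1 hL)

theorem exists_fg_ge_forall_mem_invtSubmodule {ι : Type*} [Finite ι] {N : ι → Module.End R M}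
    (hcomm : ∀ i j, Commute (N i) (N j)) (hnil : ∀ i, IsNilpotent (N i)) (hL : L.FG) :
    ∃ L' : Submodule R M, L ≤ L' ∧ L'.FG ∧ ∀ i, L' ∈ (N i).invtSubmodule := by
  classical
  have := Fintype.ofFinite ι
  suffices h : ∀ s : Finset ι, ∃ L' : Submodule R M, L ≤ L' ∧ L'.FG ∧
      ∀ i ∈ s, L' ∈ (N i).invtSubmodule by
    obtain ⟨L', hle, hfg, hinv⟩ := h Finset.univ
    exact ⟨L', hle, hfg, fun i => hinv i (Finset.mem_univ i)⟩
  intro s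
  induction s using Finset.induction_on with
  | empty => exact ⟨L, le_rfl, hL, by simp⟩
  | insert j s _ ih =>
    obtain ⟨L', hle, hfg, hinv⟩ := ih
    refine ⟨⨆ k : ℕ, L'.map (N j ^ k), hle.trans (le_iSup_map_pow _ _),
      fg_iSup_map_pow (hnil j) hfg, ?_⟩
    rintro i hi
    rcases Finset.mem_insert.1 hi with rfl | hi
    · exact iSup_map_pow_mem_invtSubmodule _ _
    · exact iSup_map_pow_mem_invtSubmodule_of_commute (hcomm j i) (hinv i hi)

end Semiring

section Ring

variable {R M : Type*} [Ring R] [AddCommGroup M] [Module R M]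

theorem map_eq_self_of_isNilpotent_sub_one {u : Module.End R M} {L : Submodule R M}
    (hu : IsNilpotent (u - 1)) (hL : L ∈ (u - 1).invtSubmodule) : L.map u = L := by
  have hLu : L ∈ u.invtSubmodule := by
    simpa using Module.End.invtSubmodule_inf_invtSubmodule_le_invtSubmodule_add 1 (u - 1)
      ⟨fun _ hx => hx, hL⟩
  refine le_antisymm ((Module.End.mem_invtSubmodule_iff_map_le u).1 hLu) fun x hx => ?_
  have hunit : IsUnit (u.restrict hLu) := by
    have h : u.restrict hLu = (u - 1).restrict hL + 1 := by
      ext y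
      exact (sub_add_cancel (u y) y).symm
    exact h ▸ (Module.End.isNilpotent.restrict hL hu).isUnit_add_one
  obtain ⟨y, hy⟩ := ((Module.End.isUnit_iff _).1 hunit).2 ⟨x, hx⟩
  exact ⟨y, y.2, congrArg Subtype.val hy⟩

end Ring

end Submodule

def Module.End.restrictScalarsRingHom (R : Type*) {S M : Type*} [Semiring R] [Semiring S]
    [AddCommMonoid M] [Module R M] [Module S M] [LinearMap.CompatibleSMul M M R S] :
    Module.End S M →+* Module.End R M where
  toFun := LinearMap.restrictScalars R
  map_one' := rfl
  map_mul' _ _ := rfl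
  map_zero' := rfl
  map_add' _ _ := rfl

theorem exists_lattice_stable_of_commuting_unipotent_general
    (K : Type*) [NontriviallyNormedField K] [IsUltrametricDist K]
    (r m : ℕ) (U : Fin m → (Matrix (Fin r) (Fin r) K)ˣ)
    (hcomm : ∀ i j, U i * U j = U j * U i)
    (hunip : ∀ i, ((U i : Matrix (Fin r) (Fin r) K) - 1) ^ r = 0) :
    ∃ L : Submodule ↥(ringOfIntegers K) (Fin r → K),
      L.FG ∧ Submodule.span K (L : Set (Fin r → K)) = ⊤ ∧
        ∀ i, (fun x => Matrix.mulVec (U i : Matrix (Fin r) (Fin r) K) x) ''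
            (L : Set (Fin r → K)) = (L : Set (Fin r → K)) := by
  set S := ringOfIntegers K
  let φ : Matrix (Fin r) (Fin r) K →+* Module.End S (Fin r → K) :=
    (Module.End.restrictScalarsRingHom S).comp Matrix.toLinAlgEquiv'.toRingHom
  have hnil : ∀ i, IsNilpotent (φ (U i) - 1) := fun i => by
    simpa using (show IsNilpotent ((U i : Matrix (Fin r) (Fin r) K) - 1) from ⟨r, hunip i⟩).map φ
  have hcommN : ∀ i j, Commute (φ (U i) - 1) (φ (U j) - 1) := fun i j =>
    (((Commute.units_val (hcomm i j)).map φ).sub_left (.one_left _)).sub_right (.one_right _)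
  obtain ⟨L, hL₀, hfg, hinv⟩ := Submodule.exists_fg_ge_forall_mem_invtSubmodule hcommN hnil
    (Submodule.fg_span (Set.finite_range (Pi.basisFun K (Fin r))))
  refine ⟨L, hfg, eq_top_mono (Submodule.span_mono hL₀) ?_, fun i => ?_⟩
  · rw [Submodule.span_span_of_tower, (Pi.basisFun K (Fin r)).span_eq]
  · exact congrArg SetLike.coe (Submodule.map_eq_self_of_isNilpotent_sub_one (hnil i) (hinv i))

/-- Let `K` be a non-archimedean local field and `U₁, …, Uₘ ∈ GL_r(K)`
pairwise commuting unipotent matrices. Then there is an `O_K`-lattice `L ⊆ K^r`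
(a finitely generated `O_K`-submodule spanning `K^r` over `K`) with `Uᵢ · L = L` for
all `i`. -/
theorem exists_lattice_stable_of_commuting_unipotent
    (K : Type*) [NontriviallyNormedField K] [IsUltrametricDist K] [LocallyCompactSpace K]
    (r m : ℕ) (U : Fin m → (Matrix (Fin r) (Fin r) K)ˣ)
    (hcomm : ∀ i j, U i * U j = U j * U i)
    (hunip : ∀ i, ((U i : Matrix (Fin r) (Fin r) K) - 1) ^ r = 0) :
    ∃ L : Submodule ↥(ringOfIntegers K) (Fin r → K),
      L.FG ∧ Submodule.span K (L : Set (Fin r → K)) = ⊤ ∧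
        ∀ i, (fun x => Matrix.mulVec (U i : Matrix (Fin r) (Fin r) K) x) ''
            (L : Set (Fin r → K)) = (L : Set (Fin r → K)) :=
  exists_lattice_stable_of_commuting_unipotent_general K r m U hcomm hunip
end

section
/- Let R ⊆ ℂ be a subring which is finitely generated as a ℤ-algebra, and let N be a positive integer. Then there exists a maximal ideal I ⊂ R such that the reduction morphism R → R/I is injective in restriction to the set {x ∈ R : x^N = 1} of N-th roots of unity contained in R. -/
instance : IsJacobsonRing ℤ := by
  rw [isJacobsonRing_iff_prime_eq]
  intro P hP
  rcases eq_or_ne P ⊥ with h | h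
  · subst h
    refine le_antisymm ?_ Ideal.le_jacobson
    intro n hn
    rw [Ideal.mem_jacobson_bot] at hn
    have h1 := hn 1
    have h2 := hn (-1)
    rw [mul_one] at h1
    rw [Int.isUnit_iff] at h1 h2
    simp only [Ideal.mem_bot]
    omega
  · haveI := hP
    haveI := IsPrime.to_maximal_ideal h
    exact Ideal.jacobson_eq_self_of_isMaximal

/-- Let `R ⊆ ℂ` be a subring which is finitely generated as a
`ℤ`-algebra, and let `N` be a positive integer. Then there exists a maximal ideal
`I ⊂ R` such that the reduction morphism `R → R/I` is injective in restriction to the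
set of `N`-th roots of unity contained in `R`. -/
theorem exists_maximalIdeal_injOn_rootsOfUnity
    (R : Subring ℂ) (hR : Algebra.FiniteType ℤ ↥R) (N : ℕ) (hN : 0 < N) :
    ∃ I : Ideal ↥R, I.IsMaximal ∧
      Set.InjOn (Ideal.Quotient.mk I) {x : ↥R | x ^ N = 1} := by
  haveI : IsJacobsonRing ↥R := isJacobsonRing_of_finiteType (A := ℤ)
  -- the set of N-th roots of unity in R is finite
  have hS : {x : ↥R | x ^ N = 1}.Finite := by
    apply Set.Finite.subset (Polynomial.nthRoots N (1 : ↥R)).toFinset.finite_toSet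
    intro x hx
    simp only [Multiset.mem_toFinset, Finset.mem_coe, Polynomial.mem_nthRoots hN]
    exact hx
  classical
  set F := hS.toFinset with hF
  set P : ↥R := ∏ p ∈ (F ×ˢ F).filter (fun p => p.1 ≠ p.2), (p.1 - p.2) with hP
  have hPne : P ≠ 0 := by
    rw [hP]
    apply Finset.prod_ne_zero_iff.mpr
    intro p hp
    rw [Finset.mem_filter] at hp
    exact sub_ne_zero_of_ne hp.2
  have hjac : (⊥ : Ideal ↥R).jacobson = ⊥ :=
    isJacobsonRing_iff.mp ‹_› ⊥ Ideal.isRadical_bot_of_noZeroDivisors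
  have hPnot : P ∉ (⊥ : Ideal ↥R).jacobson := by
    rw [hjac]; simpa using hPne
  rw [Ideal.jacobson, Ideal.mem_sInf] at hPnot
  push_neg at hPnot
  obtain ⟨J, ⟨-, hJmax⟩, hPJ⟩ := hPnot
  refine ⟨J, hJmax, ?_⟩
  intro x hx y hy hxy
  by_contra hne
  have hmem : (x, y) ∈ (F ×ˢ F).filter (fun p => p.1 ≠ p.2) := by
    simp [hF, Set.Finite.mem_toFinset, hx, hy, hne]
  have hdvd : (x - y) ∣ P := Finset.dvd_prod_of_mem _ hmem
  have hxyJ : x - y ∈ J := Ideal.Quotient.eq.mp hxy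
  exact hPJ (J.mem_of_dvd hdvd hxyJ)
end

section
/- Let A be a finitely generated free abelian group and let (K_i)_{i ∈ I} be a family of subgroups of A such that each quotient A/K_i is torsion-free and ⋂_{i ∈ I} K_i = {0}. Then there exists a finite subset I_0 ⊆ I such that ⋂_{i ∈ I_0} K_i = {0}. -/
/-!
Choose a finite subfamily whose intersection has minimal rank. Intersecting it with one more
`K j` gives a saturated subgroup of the same rank, and a saturated subgroup of full rank in a
finitely generated group `L` is `L` itself, since `L` modulo it is torsion. So the minimal
intersection already lies in every `K j`.
-/

open Module

namespace Submodule

variable {R M : Type*} [CommRing R] [AddCommGroup M] [Module R M]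

def IsSaturated (N : Submodule R M) : Prop :=
  ∀ (r : R) (x : M), r ≠ 0 → r • x ∈ N → x ∈ N

lemma IsSaturated.iInf {ι : Sort*} {N : ι → Submodule R M} (hN : ∀ i, (N i).IsSaturated) :
    (⨅ i, N i).IsSaturated := fun r x hr hx ↦
  mem_iInf _ |>.mpr fun i ↦ hN i r x hr (mem_iInf _ |>.mp hx i)

lemma IsSaturated.eq_of_le_of_finrank_le [IsDomain R] {N L : Submodule R M}
    (hN : N.IsSaturated) (hNL : N ≤ L) [Module.Finite R L] (h : finrank R L ≤ finrank R N) :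
    N = L := by
  set N' := N.comap L.subtype
  have hN' : finrank R N' = finrank R N := (comapSubtypeEquivOfLe hNL).finrank_eq
  have hquot : finrank R (L ⧸ N') = 0 := by
    have := N'.finrank_quotient_add_finrank
    omega
  refine le_antisymm hNL fun x hx ↦ ?_
  obtain ⟨r, hr, hrx⟩ := finrank_eq_zero_iff.mp hquot (N'.mkQ ⟨x, hx⟩)
  rw [← map_smul, mkQ_apply, Quotient.mk_eq_zero] at hrx
  exact hN r x hr hrx

theorem exists_finset_biInf_eq_iInf_of_isSaturated [IsDomain R] [IsNoetherian R M] {ι : Type*}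
    (N : ι → Submodule R M) (hN : ∀ i, (N i).IsSaturated) :
    ∃ s : Finset ι, ⨅ i ∈ s, N i = ⨅ i, N i := by
  classical
  let d (s : Finset ι) : ℕ := finrank R ↥(⨅ i ∈ s, N i)
  let s := Function.argmin d
  refine ⟨s, le_antisymm (le_iInf fun j ↦ ?_) (le_iInf₂ fun i _ ↦ iInf_le N i)⟩
  have hsat : (⨅ i ∈ insert j s, N i).IsSaturated :=
    IsSaturated.iInf fun i ↦ IsSaturated.iInf fun _ ↦ hN i
  have heq := hsat.eq_of_le_of_finrank_le (biInf_mono fun _ ↦ Finset.mem_insert_of_mem)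
    (Function.argmin_le d (insert j s))
  rw [← heq, Finset.iInf_insert]
  exact inf_le_left

end Submodule

theorem exists_finite_subfamily_inf_eq_bot_of_saturated_general
    (A : Type*) [AddCommGroup A] [Module.Finite ℤ A]
    {I : Type*} (K : I → AddSubgroup A)
    (hsat : ∀ i, ∀ (n : ℤ) (a : A), n ≠ 0 → n • a ∈ K i → a ∈ K i)
    (hint : (⨅ i, K i) = ⊥) :
    ∃ s : Finset I, (⨅ i ∈ s, K i) = ⊥ := by
  obtain ⟨s, hs⟩ :=
    Submodule.exists_finset_biInf_eq_iInf_of_isSaturated (fun i ↦ (K i).toIntSubmodule) hsat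
  refine ⟨s, AddSubgroup.toIntSubmodule.injective ?_⟩
  rwa [← OrderIso.map_iInf, hint, map_bot, ← OrderIso.map_iInf₂] at hs

/-- Let `A` be a finitely generated free abelian group and `(K i)_{i ∈ I}`
a family of subgroups of `A` such that each quotient `A / K i` is torsion-free (i.e. each
`K i` is saturated) and `⋂ i, K i = {0}`. Then there is a finite subset `I₀ ⊆ I` with
`⋂_{i ∈ I₀} K i = {0}`. -/
theorem exists_finite_subfamily_inf_eq_bot_of_saturated
    (A : Type*) [AddCommGroup A] [Module.Free ℤ A] [Module.Finite ℤ A]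
    {I : Type*} (K : I → AddSubgroup A)
    (hsat : ∀ i, ∀ (n : ℤ) (a : A), n ≠ 0 → n • a ∈ K i → a ∈ K i)
    (hint : (⨅ i, K i) = ⊥) :
    ∃ s : Finset I, (⨅ i ∈ s, K i) = ⊥ :=
  exists_finite_subfamily_inf_eq_bot_of_saturated_general A K hsat hint
end
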